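/- Let (V_k) be a sequence of non-negative real numbers satisfying V_{k+1} ≤ p·V_k + q·max_{max(k−d(k),0) ≤ ℓ ≤ k} V_ℓ + β for all k ≥ 0, where p, q, β > 0, and 0 ≤ d(k) ≤ d_max for all k. If p + q < 1, then for all k, V_k ≤ ρ^k·V_0 + β/(1−p−q), where ρ = (p+q)^{1/(1+d_max)}. -/
import Mathlib


theorem stmt_0 (V : ℕ → ℝ) (d : ℕ → ℕ) (dmax : ℕ) (p q β : ℝ)
    (hV : ∀ k, 0 ≤ V k) (hd : ∀ k, d k ≤ dmax)
    (hp : 0 < p) (hq : 0 < q) (hβ : 0 < β) (hpq : p + q < 1)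
    (hrec : ∀ k, V (k + 1) ≤ p * V k +
      q * (Finset.Icc (k - d k) k).sup' (Finset.nonempty_Icc.mpr (Nat.sub_le k (d k))) V + β) :
    ∀ k, V k ≤ ((p + q) ^ ((1 : ℝ) / (1 + dmax))) ^ k * V 0 + β / (1 - p - q) := by
  set ρ : ℝ := (p + q) ^ ((1 : ℝ) / (1 + dmax)) with hρdef
  have hpq0 : 0 < p + q := by linarith
  have hρpos : 0 < ρ := Real.rpow_pos_of_pos hpq0 _
  have hρle1 : ρ ≤ 1 := Real.rpow_le_one hpq0.le hpq.le (by positivity)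
  have hρpow : ρ ^ (dmax + 1) = p + q := by
    rw [hρdef, ← Real.rpow_natCast ((p + q) ^ ((1 : ℝ) / (1 + dmax))) (dmax + 1),
      ← Real.rpow_mul hpq0.le]
    rw [show (1 : ℝ) / (1 + dmax) * ((dmax + 1 : ℕ) : ℝ) = 1 by
      push_cast; field_simp; ring]
    exact Real.rpow_one _
  have hC : 0 < β / (1 - p - q) := by
    apply div_pos hβ; linarith
  have h1pq : (1 : ℝ) - p - q ≠ 0 := by linarith
  have hβC : (1 - p - q) * (β / (1 - p - q)) = β := by field_simp
  intro k
  induction k using Nat.strong_induction_on with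
  | _ k ih =>
    match k with
    | 0 => simpa using by nlinarith [hV 0]
    | Nat.succ n =>
      set m : ℕ := n - d n with hm
      set C : ℝ := β / (1 - p - q) with hCdef
      have hsup : (Finset.Icc (n - d n) n).sup'
          (Finset.nonempty_Icc.mpr (Nat.sub_le n (d n))) V ≤ ρ ^ m * V 0 + C := by
        apply Finset.sup'_le
        intro ℓ hℓ
        rw [Finset.mem_Icc] at hℓ
        have h1 := ih ℓ (Nat.lt_succ_of_le hℓ.2)
        have h2 : ρ ^ ℓ ≤ ρ ^ m := pow_le_pow_of_le_one hρpos.le hρle1 hℓ.1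
        nlinarith [hV 0, mul_le_mul_of_nonneg_right h2 (hV 0)]
      have hmn : m ≤ n := Nat.sub_le n (d n)
      have h1 : ρ ^ n ≤ ρ ^ m := pow_le_pow_of_le_one hρpos.le hρle1 hmn
      have hle : n + 1 ≤ m + dmax + 1 := by
        have := hd n; omega
      have h2 : ρ ^ (m + dmax + 1) ≤ ρ ^ (n + 1) :=
        pow_le_pow_of_le_one hρpos.le hρle1 hle
      have h3 : ρ ^ (m + dmax + 1) = (p + q) * ρ ^ m := by
        rw [show m + dmax + 1 = m + (dmax + 1) by ring, pow_add, hρpow]; ring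
      have hrecn := hrec n
      have hihn := ih n (Nat.lt_succ_self n)
      have e1 : p * V n ≤ p * (ρ ^ n * V 0 + C) :=
        mul_le_mul_of_nonneg_left hihn hp.le
      have e2 : q * (Finset.Icc (n - d n) n).sup'
          (Finset.nonempty_Icc.mpr (Nat.sub_le n (d n))) V ≤ q * (ρ ^ m * V 0 + C) :=
        mul_le_mul_of_nonneg_left hsup hq.le
      have e3 : p * (ρ ^ n * V 0) ≤ p * (ρ ^ m * V 0) :=
        mul_le_mul_of_nonneg_left (mul_le_mul_of_nonneg_right h1 (hV 0)) hp.le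
      have e4 : (p + q) * (ρ ^ m * V 0) = ρ ^ (m + dmax + 1) * V 0 := by rw [h3]; ring
      have e5 : ρ ^ (m + dmax + 1) * V 0 ≤ ρ ^ (n + 1) * V 0 :=
        mul_le_mul_of_nonneg_right h2 (hV 0)
      show V (n + 1) ≤ ρ ^ (n + 1) * V 0 + C
      linarith
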